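/- arXiv:2212.14841 — 6 statements merged into one kernel-verified Lean document; each statement's English description precedes it below -/
import Mathlib

section
/- For integers m ≥ 0 and n ≥ 1 with n dividing 2m+1, and any real number a, we have ∑_{j=0}^m (-4)^j * C(m+j, 2j) * ∑_{k=0}^{n-1} sin(a + 2kπ/n) * cos(a + 2kπ/n)^{2j} = (-1)^m * n * sin((2m+1)a). -/
/-!
The polynomial `oddSineSum m x = ∑ j ≤ m, (-4)^j C(m+j, 2j) x^(2j)` satisfies
`sin θ · oddSineSum m (cos θ) = (-1)^m sin((2m+1)θ)`: both sides obey the recurrence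
`u (m+2) = (2 - 4 cos² θ) u (m+1) - u m`, which on the right is
`sin(x + 2θ) + sin(x - 2θ) = 2 cos 2θ sin x`, and on the left is Pascal's rule.
Each summand over `k` is therefore `(-1)^m sin((2m+1)(a + 2kπ/n))`, and since `n ∣ 2m+1`
the shift `(2m+1)·2kπ/n` is a multiple of `2π`, so all `n` summands equal `(-1)^m sin((2m+1)a)`.
-/

open Real Finset

theorem Nat.choose_add_three_add_choose (p i : ℕ) :
    (p + 3).choose (2 * i + 2) + (p + 1).choose (2 * i + 2)
      = 2 * (p + 2).choose (2 * i + 2) + (p + 1).choose (2 * i) := by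
  rw [Nat.choose_succ_succ' (p + 2), Nat.choose_succ_succ' (p + 1) (2 * i),
    Nat.choose_succ_succ' (p + 1) (2 * i + 1)]
  ring

section OddSineSum

variable {R : Type*} [CommRing R]

def oddSineSum (m : ℕ) (x : R) : R :=
  ∑ j ∈ range (m + 1), (-4) ^ j * ((m + j).choose (2 * j) : R) * x ^ (2 * j)

theorem oddSineSum_eq_one_add {m N : ℕ} (hN : m ≤ N) (x : R) :
    oddSineSum m x
      = 1 + ∑ i ∈ range N, (-4) ^ (i + 1) * ((m + i + 1).choose (2 * i + 2) : R) * x ^ (2 * i + 2) := by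
  have hext : oddSineSum m x
      = ∑ j ∈ range (N + 1), (-4) ^ j * ((m + j).choose (2 * j) : R) * x ^ (2 * j) := by
    refine sum_subset (range_subset_range.2 (by omega)) fun j hjN hjm => ?_
    rw [mem_range] at hjN hjm
    rw [Nat.choose_eq_zero_of_lt (by omega), Nat.cast_zero, mul_zero, zero_mul]
  rw [hext, sum_range_succ', add_comm]
  simp [mul_add, add_assoc]

theorem oddSineSum_add_two (m : ℕ) (x : R) :
    oddSineSum (m + 2) x = (2 - 4 * x ^ 2) * oddSineSum (m + 1) x - oddSineSum m x := by
  have hx2 : x ^ 2 * oddSineSum (m + 1) x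
      = ∑ i ∈ range (m + 2), (-4) ^ i * ((m + i + 1).choose (2 * i) : R) * x ^ (2 * i + 2) := by
    rw [oddSineSum, mul_sum]
    refine sum_congr rfl fun i _ => ?_
    rw [add_right_comm]
    ring
  have hcoeff : ∀ i ∈ range (m + 2),
      (-4) ^ (i + 1) * ((m + 2 + i + 1).choose (2 * i + 2) : R) * x ^ (2 * i + 2)
        = 2 * ((-4) ^ (i + 1) * ((m + 1 + i + 1).choose (2 * i + 2) : R) * x ^ (2 * i + 2))
          - 4 * ((-4) ^ i * ((m + i + 1).choose (2 * i) : R) * x ^ (2 * i + 2))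
          - (-4) ^ (i + 1) * ((m + i + 1).choose (2 * i + 2) : R) * x ^ (2 * i + 2) := by
    intro i _
    have h := congrArg (Nat.cast : ℕ → R) (Nat.choose_add_three_add_choose (m + i) i)
    push_cast at h
    rw [show m + 2 + i + 1 = m + i + 3 by omega, show m + 1 + i + 1 = m + i + 2 by omega]
    linear_combination (-4) ^ (i + 1) * x ^ (2 * i + 2) * h
  have hsum := sum_congr rfl hcoeff
  rw [sum_sub_distrib, sum_sub_distrib, ← mul_sum, ← mul_sum] at hsum
  linear_combination oddSineSum_eq_one_add (m := m + 2) le_rfl x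
    - 2 * oddSineSum_eq_one_add (m := m + 1) (N := m + 2) (by omega) x + 4 * hx2
    + oddSineSum_eq_one_add (m := m) (N := m + 2) (by omega) x + hsum

end OddSineSum

theorem sin_mul_oddSineSum_cos (m : ℕ) (θ : ℝ) :
    sin θ * oddSineSum m (cos θ) = (-1) ^ m * sin ((2 * m + 1) * θ) := by
  induction m using Nat.twoStepInduction with
  | zero => simp [oddSineSum]
  | one =>
    norm_num [oddSineSum, sum_range_succ, sin_three_mul]
    linear_combination (-4 * sin θ) * sin_sq_add_cos_sq θ
  | more m ih₀ ih₁ =>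
    set φ := (2 * m + 3) * θ
    have hφ₀ : (2 * (m : ℝ) + 1) * θ = φ - 2 * θ := by ring
    have hφ₁ : (2 * ((m + 1 : ℕ) : ℝ) + 1) * θ = φ := by push_cast; ring
    have hφ₂ : (2 * ((m + 2 : ℕ) : ℝ) + 1) * θ = φ + 2 * θ := by push_cast; ring
    rw [hφ₀] at ih₀
    rw [hφ₁] at ih₁
    rw [hφ₂, oddSineSum_add_two]
    linear_combination (2 - 4 * cos θ ^ 2) * ih₁ - ih₀ + (-1) ^ m * two_mul_sin_mul_cos φ (2 * θ)
      - (-1) ^ m * 2 * sin φ * cos_two_mul θ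

theorem sin_natCast_mul_add_two_pi_div {N n : ℕ} (h : n ∣ N) (a : ℝ) (k : ℕ) :
    sin (N * (a + 2 * k * π / n)) = sin (N * a) := by
  obtain ⟨t, rfl⟩ := h
  rcases eq_or_ne n 0 with rfl | hn
  · simp
  have hshift : ((n * t : ℕ) : ℝ) * (a + 2 * k * π / n) = (n * t : ℕ) * a + (k * t : ℕ) * (2 * π) := by
    push_cast
    field_simp
  rw [hshift, sin_add_nat_mul_two_pi]

theorem stmt_0_general (m n : ℕ) (hdvd : n ∣ 2 * m + 1) (a : ℝ) :
    ∑ j ∈ Finset.range (m + 1), (-4 : ℝ) ^ j * (Nat.choose (m + j) (2 * j)) *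
      ∑ k ∈ Finset.range n, Real.sin (a + 2 * k * π / n) * Real.cos (a + 2 * k * π / n) ^ (2 * j)
    = (-1 : ℝ) ^ m * n * Real.sin ((2 * m + 1) * a) := by
  have hperiod (k : ℕ) : sin ((2 * m + 1) * (a + 2 * k * π / n)) = sin ((2 * m + 1) * a) := by
    exact_mod_cast sin_natCast_mul_add_two_pi_div hdvd a k
  calc _ = ∑ k ∈ range n, sin (a + 2 * k * π / n) * oddSineSum m (cos (a + 2 * k * π / n)) := by
        simp only [oddSineSum, mul_sum]
        rw [sum_comm]
        exact sum_congr rfl fun k _ => sum_congr rfl fun j _ => by ring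
    _ = ∑ k ∈ range n, (-1) ^ m * sin ((2 * m + 1) * a) := by
        refine sum_congr rfl fun k _ => ?_
        rw [sin_mul_oddSineSum_cos, hperiod]
    _ = _ := by
        rw [sum_const, card_range, nsmul_eq_mul]
        ring

theorem stmt_0 (m n : ℕ) (hn : 1 ≤ n) (hdvd : n ∣ 2 * m + 1) (a : ℝ) :
    ∑ j ∈ Finset.range (m + 1), (-4 : ℝ) ^ j * (Nat.choose (m + j) (2 * j)) *
      ∑ k ∈ Finset.range n, Real.sin (a + 2 * k * π / n) * Real.cos (a + 2 * k * π / n) ^ (2 * j)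
    = (-1 : ℝ) ^ m * n * Real.sin ((2 * m + 1) * a) :=
  stmt_0_general m n hdvd a
end

section
/- For integers m ≥ 0 and n ≥ 1 with n not dividing 2m+1, and any real number a, we have ∑_{j=0}^m (-4)^j * C(m+j, 2j) * ∑_{k=0}^{n-1} sin(a + 2kπ/n) * cos(a + 2kπ/n)^{2j} = 0. -/
open Real Finset

/-!
With `P_m(x) = ∑_{j ≤ m} (-4)^j C(m+j, 2j) x^{2j}`, exchanging the sums turns the left side into
`∑_k sin θ_k · P_m(cos θ_k)` with `θ_k = a + 2kπ/n`, and `sin θ · P_m(cos θ) = (-1)^m sin((2m+1)θ)`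
follows from the recurrence
`P_{m+2} = (2 - 4x²) P_{m+1} - P_m`, which matches `sin(B + 2θ) + sin(B - 2θ) = 2 sin B cos 2θ`.
The sum over `k` is then the imaginary part of a geometric sum in the `n`-th root of unity
`exp(2πi(2m+1)/n)`, which is `≠ 1` because `n ∤ 2m+1`, so the sum vanishes.
-/

lemma IsPrimitiveRoot.sum_range_pow_pow_eq_zero {R : Type*} [CommRing R] [IsDomain R] {ζ : R}
    {n s : ℕ} (hζ : IsPrimitiveRoot ζ n) (hs : ¬ n ∣ s) : ∑ k ∈ range n, (ζ ^ s) ^ k = 0 := by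
  have hne : ζ ^ s - 1 ≠ 0 := sub_ne_zero.2 fun h => hs ((hζ.pow_eq_one_iff_dvd s).1 h)
  have hmul : (ζ ^ s - 1) * ∑ k ∈ range n, (ζ ^ s) ^ k = 0 := by
    rw [mul_geom_sum, ← pow_mul, mul_comm, pow_mul, hζ.pow_eq_one, one_pow, sub_self]
  exact (mul_eq_zero.1 hmul).resolve_left hne

lemma sum_range_sin_add_eq_zero {n s : ℕ} (hs : ¬ n ∣ s) (b : ℝ) :
    ∑ k ∈ range n, sin (b + 2 * π * k * s / n) = 0 := by
  rcases Nat.eq_zero_or_pos n with rfl | hn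
  · simp
  have hexp : ∀ k : ℕ, Complex.exp (↑(b + 2 * π * k * s / n) * Complex.I) =
      Complex.exp (b * Complex.I) * (Complex.exp (2 * π * Complex.I / n) ^ s) ^ k := by
    intro k
    rw [← Complex.exp_nat_mul, ← Complex.exp_nat_mul, ← Complex.exp_add]
    push_cast
    ring_nf
  simp only [← Complex.exp_ofReal_mul_I_im, ← Complex.im_sum, hexp, ← mul_sum,
    (Complex.isPrimitiveRoot_exp n hn.ne').sum_range_pow_pow_eq_zero hs, mul_zero, Complex.zero_im]

lemma Nat.choose_add_two_add_choose (p q : ℕ) :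
    (p + 2).choose (q + 2) + p.choose (q + 2) = 2 * (p + 1).choose (q + 2) + p.choose q := by
  simp only [Nat.choose_succ_succ', add_assoc, Nat.reduceAdd]; omega

-- `(-1)^m U_{2m}(x)`, with `U` the Chebyshev polynomials of the second kind.
def altChebyshevU (m : ℕ) (x : ℝ) : ℝ :=
  ∑ j ∈ range (m + 1), (-4 : ℝ) ^ j * (m + j).choose (2 * j) * x ^ (2 * j)

lemma altChebyshevU_eq_sum_range {m N : ℕ} (h : m < N) (x : ℝ) :
    altChebyshevU m x = ∑ j ∈ range N, (-4 : ℝ) ^ j * (m + j).choose (2 * j) * x ^ (2 * j) :=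
  sum_subset (range_subset_range.2 h) fun j _ hj => by
    rw [Nat.choose_eq_zero_of_lt (by simp at hj; omega), Nat.cast_zero, mul_zero, zero_mul]

lemma altChebyshevU_add_two (m : ℕ) (x : ℝ) :
    altChebyshevU (m + 2) x = (2 - 4 * x ^ 2) * altChebyshevU (m + 1) x - altChebyshevU m x := by
  have hshift : -4 * x ^ 2 * altChebyshevU (m + 1) x =
      ∑ j ∈ range (m + 2), (-4 : ℝ) ^ (j + 1) * (m + 1 + j).choose (2 * j) * x ^ (2 * (j + 1)) := by
    rw [altChebyshevU, mul_sum]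
    exact sum_congr rfl fun j _ => by ring
  have hsecond : altChebyshevU (m + 2) x - 2 * altChebyshevU (m + 1) x + altChebyshevU m x
      = -4 * x ^ 2 * altChebyshevU (m + 1) x := by
    rw [hshift, altChebyshevU_eq_sum_range (N := m + 3) (by omega),
      altChebyshevU_eq_sum_range (m := m + 1) (N := m + 3) (by omega),
      altChebyshevU_eq_sum_range (m := m) (N := m + 3) (by omega),
      mul_sum, ← sum_sub_distrib, ← sum_add_distrib, sum_range_succ']
    simp only [add_zero, mul_zero, pow_zero, Nat.choose_zero_right, Nat.cast_one, mul_one]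
    rw [show (1 : ℝ) - 2 + 1 = 0 by norm_num, add_zero]
    refine sum_congr rfl fun j _ => ?_
    have h : ((m + 2 + (j + 1)).choose (2 * (j + 1)) : ℝ) + (m + (j + 1)).choose (2 * (j + 1))
        = 2 * (m + 1 + (j + 1)).choose (2 * (j + 1)) + (m + 1 + j).choose (2 * j) := by
      have h := Nat.choose_add_two_add_choose (m + 1 + j) (2 * j)
      ring_nf at h ⊢
      exact_mod_cast h
    linear_combination (-4 : ℝ) ^ (j + 1) * x ^ (2 * (j + 1)) * h
  linear_combination hsecond

lemma sin_mul_altChebyshevU (m : ℕ) (θ : ℝ) :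
    sin θ * altChebyshevU m (cos θ) = (-1) ^ m * sin ((2 * m + 1) * θ) := by
  induction m using Nat.twoStepInduction with
  | zero => simp [altChebyshevU]
  | one =>
    simp only [altChebyshevU, Nat.reduceAdd, sum_range_succ, range_one, sum_singleton, pow_zero,
      add_zero, mul_zero, Nat.choose_succ_self_right, zero_add, Nat.cast_one, mul_one, pow_one,
      Nat.choose_self, neg_mul, one_mul]
    rw [show (2 + 1 : ℝ) * θ = 3 * θ by norm_num]
    linear_combination sin_three_mul θ - 4 * sin θ * sin_sq_add_cos_sq θ
  | more m ih₀ ih₁ =>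
    have h₀ : (2 * (m : ℝ) + 1) * θ = (2 * m + 3) * θ - 2 * θ := by ring
    have h₁ : (2 * ((m + 1 : ℕ) : ℝ) + 1) * θ = (2 * m + 3) * θ := by push_cast; ring
    have h₂ : (2 * ((m + 2 : ℕ) : ℝ) + 1) * θ = (2 * m + 3) * θ + 2 * θ := by push_cast; ring
    rw [altChebyshevU_add_two, mul_sub, mul_left_comm, ih₁, ih₀, h₀, h₁, h₂, sin_add, sin_sub,
      cos_two_mul]
    ring

theorem stmt_1_general (m n : ℕ) (hdvd : ¬ n ∣ 2 * m + 1) (a : ℝ) :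
    ∑ j ∈ Finset.range (m + 1), (-4 : ℝ) ^ j * (Nat.choose (m + j) (2 * j)) *
      ∑ k ∈ Finset.range n, Real.sin (a + 2 * k * π / n) * Real.cos (a + 2 * k * π / n) ^ (2 * j)
    = 0 := by
  calc _ = ∑ k ∈ range n, sin (a + 2 * k * π / n) * altChebyshevU m (cos (a + 2 * k * π / n)) := by
        simp only [altChebyshevU, mul_sum]
        rw [sum_comm]
        exact sum_congr rfl fun k _ => sum_congr rfl fun j _ => by ring
    _ = (-1) ^ m * ∑ k ∈ range n, sin ((2 * m + 1) * a + 2 * π * k * (2 * m + 1 : ℕ) / n) := by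
        rw [mul_sum]
        refine sum_congr rfl fun k _ => ?_
        rw [sin_mul_altChebyshevU]
        congr 2
        push_cast
        ring
    _ = 0 := by rw [sum_range_sin_add_eq_zero hdvd, mul_zero]

theorem stmt_1 (m n : ℕ) (hn : 1 ≤ n) (hdvd : ¬ n ∣ 2 * m + 1) (a : ℝ) :
    ∑ j ∈ Finset.range (m + 1), (-4 : ℝ) ^ j * (Nat.choose (m + j) (2 * j)) *
      ∑ k ∈ Finset.range n, Real.sin (a + 2 * k * π / n) * Real.cos (a + 2 * k * π / n) ^ (2 * j)
    = 0 :=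
  stmt_1_general m n hdvd a
end

section
/- For integers m ≥ 0 and n ≥ 1 with n dividing 2(m+1), and any real number a, we have ∑_{j=0}^m (-4)^j * C(m+j+1, 2j+1) * ∑_{k=0}^{n-1} sin(a + 2kπ/n) * cos(a + 2kπ/n)^{2j+1} = (-1)^m * (n/2) * sin(2(m+1)a). -/
/-!
Swapping the two sums, the summand for `θ = a + 2kπ/n` is `sin θ · S_m(cos θ)` with
`S_m(x) = ∑ⱼ (-4)ʲ C(m+j+1, 2j+1) x^(2j+1) = (-1)^m U_{2m+1}(x) / 2`, both sides satisfying
`S_{m+2} = (2 - 4x²) S_{m+1} - S_m`. As `sin θ · U_{2m+1}(cos θ) = sin (2(m+1)θ)` and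
`n ∣ 2(m+1)`, each of the `n` terms equals `(-1)^m sin (2(m+1)a) / 2`.
-/

open Real Finset Polynomial Polynomial.Chebyshev

theorem Nat.choose_add_two_add_choose_s2 (n k : ℕ) :
    (n + 2).choose (k + 2) + n.choose (k + 2) = 2 * (n + 1).choose (k + 2) + n.choose k := by
  rw [Nat.choose_succ_succ (n + 1), Nat.choose_succ_succ n, Nat.choose_succ_succ n (k + 1)]
  ring

section OddUSum

variable {R : Type*} [CommRing R]

/-- The substitution `j = m - i` turns this into the classical expansion
`U_{2m+1}(x) = ∑ᵢ (-1)ⁱ C(2m+1-i, i) (2x)^(2m+1-2i)`, up to the factor `(-1)^m / 2`. -/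
noncomputable def oddUSum (x : R) (m : ℕ) : R :=
  ∑ j ∈ range (m + 1), (-4) ^ j * ((m + j + 1).choose (2 * j + 1) : R) * x ^ (2 * j + 1)

theorem oddUSum_eq_sum_range {m N : ℕ} (hN : m + 1 ≤ N) (x : R) :
    oddUSum x m =
      ∑ j ∈ range N, (-4) ^ j * ((m + j + 1).choose (2 * j + 1) : R) * x ^ (2 * j + 1) := by
  refine sum_subset (range_subset_range.2 hN) fun j _ hj => ?_
  rw [Nat.choose_eq_zero_of_lt (by simp at hj; omega)]
  simp

theorem oddUSum_add_two (x : R) (m : ℕ) :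
    oddUSum x (m + 2) = (2 - 4 * x ^ 2) * oddUSum x (m + 1) - oddUSum x m := by
  set t : ℕ → ℕ → R := fun m j =>
    (-4) ^ j * ((m + j + 1).choose (2 * j + 1) : R) * x ^ (2 * j + 1)
  have h_succ (j : ℕ) :
      t (m + 2) (j + 1) = 2 * t (m + 1) (j + 1) - t m (j + 1) - 4 * x ^ 2 * t (m + 1) j := by
    have h := Nat.choose_add_two_add_choose_s2 (m + j + 2) (2 * j + 1)
    replace h := congrArg (Nat.cast : ℕ → R) h
    push_cast at h
    simp only [t, show m + 2 + (j + 1) + 1 = m + j + 2 + 2 by omega,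
      show m + 1 + (j + 1) + 1 = m + j + 2 + 1 by omega, show m + (j + 1) + 1 = m + j + 2 by omega,
      show m + 1 + j + 1 = m + j + 2 by omega, show 2 * (j + 1) + 1 = 2 * j + 1 + 2 by omega]
    linear_combination (-4) ^ (j + 1) * x ^ (2 * j + 1 + 2) * h
  have h_zero : t (m + 2) 0 = 2 * t (m + 1) 0 - t m 0 := by
    simp only [t]
    push_cast [Nat.choose_one_right]
    ring
  calc oddUSum x (m + 2) = ∑ j ∈ range (m + 2), t (m + 2) (j + 1) + t (m + 2) 0 :=
        sum_range_succ' _ _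
    _ = 2 * ∑ j ∈ range (m + 3), t (m + 1) j - ∑ j ∈ range (m + 3), t m j
          - 4 * x ^ 2 * ∑ j ∈ range (m + 2), t (m + 1) j := by
      simp only [sum_range_succ' _ (m + 2), h_succ, h_zero, sum_sub_distrib, ← mul_sum]
      ring
    _ = _ := by
      rw [← oddUSum_eq_sum_range (by omega), ← oddUSum_eq_sum_range (by omega), oddUSum]
      ring

theorem Polynomial.Chebyshev.U_add_four (n : ℤ) :
    U R (n + 4) = (4 * X ^ 2 - 2) * U R (n + 2) - U R n := by
  have h₂ := U_add_two R n
  have h₃ := U_add_two R (n + 1)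
  have h₄ := U_add_two R (n + 2)
  ring_nf at h₂ h₃ h₄ ⊢
  linear_combination h₄ + 2 * X * h₃ + h₂

theorem Polynomial.Chebyshev.U_two_mul_add_one (m : ℕ) :
    U R (2 * m + 1) = (-1) ^ m * 2 * oddUSum X m := by
  induction m using Nat.twoStepInduction with
  | zero => simp [oddUSum]
  | one =>
    have h := U_add_four (R := R) (-1)
    norm_num [oddUSum, sum_range_succ] at h ⊢
    rw [h]
    ring
  | more m ih₀ ih₁ =>
    push_cast at ih₁ ⊢
    rw [show (2 * (m + 2) + 1 : ℤ) = 2 * m + 1 + 4 by ring, U_add_four,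
      show (2 * m + 1 + 2 : ℤ) = 2 * (m + 1) + 1 by ring, ih₀, ih₁, oddUSum_add_two]
    ring

theorem eval_oddUSum_X (x : R) (m : ℕ) : (oddUSum X m).eval x = oddUSum x m := by
  simp [oddUSum, eval_finsetSum]

end OddUSum

theorem sin_mul_oddUSum_cos (θ : ℝ) (m : ℕ) :
    sin θ * oddUSum (cos θ) m = (-1) ^ m * sin (2 * (m + 1) * θ) / 2 := by
  have h := U_real_cos θ (2 * m + 1)
  simp only [U_two_mul_add_one, eval_mul, eval_pow, eval_neg, eval_one, eval_ofNat,
    eval_oddUSum_X] at h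
  push_cast at h
  rw [show (2 * m + 1 + 1 : ℝ) = 2 * (m + 1) by ring] at h
  have h_sign : ((-1 : ℝ) ^ m) ^ 2 = 1 := by
    rw [← pow_mul, mul_comm, pow_mul, neg_one_sq, one_pow]
  rw [← h]
  linear_combination (-oddUSum (cos θ) m * sin θ) * h_sign

theorem sin_natCast_mul_add_two_mul_pi_div {N n : ℕ} (h : n ∣ N) (a : ℝ) (k : ℤ) :
    sin (N * (a + 2 * k * π / n)) = sin (N * a) := by
  obtain ⟨t, rfl⟩ := h
  rcases eq_or_ne n 0 with rfl | hn
  · simp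
  have h_shift :
      ((n * t : ℕ) : ℝ) * (a + 2 * k * π / n) = (n * t : ℕ) * a + (t * k : ℤ) * (2 * π) := by
    push_cast
    field_simp
  rw [h_shift, sin_add_int_mul_two_pi]

theorem stmt_2_general (m n : ℕ) (hdvd : n ∣ 2 * (m + 1)) (a : ℝ) :
    ∑ j ∈ Finset.range (m + 1), (-4 : ℝ) ^ j * (Nat.choose (m + j + 1) (2 * j + 1)) *
      ∑ k ∈ Finset.range n, Real.sin (a + 2 * k * π / n) * Real.cos (a + 2 * k * π / n) ^ (2 * j + 1)
    = (-1 : ℝ) ^ m * (n / 2) * Real.sin (2 * (m + 1) * a) := by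
  have h_period (k : ℕ) :
      sin (2 * (m + 1) * (a + 2 * k * π / n)) = sin (2 * (m + 1) * a) := by
    exact_mod_cast sin_natCast_mul_add_two_mul_pi_div hdvd a k
  calc _ = ∑ k ∈ range n, sin (a + 2 * k * π / n) * oddUSum (cos (a + 2 * k * π / n)) m := by
        simp only [mul_sum, oddUSum]
        rw [sum_comm]
        exact sum_congr rfl fun k _ => sum_congr rfl fun j _ => by ring
    _ = ∑ k ∈ range n, (-1) ^ m * sin (2 * (m + 1) * a) / 2 := by
        simp only [sin_mul_oddUSum_cos, h_period]
    _ = _ := by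
        rw [sum_const, card_range, nsmul_eq_mul]
        ring

theorem stmt_2 (m n : ℕ) (hn : 1 ≤ n) (hdvd : n ∣ 2 * (m + 1)) (a : ℝ) :
    ∑ j ∈ Finset.range (m + 1), (-4 : ℝ) ^ j * (Nat.choose (m + j + 1) (2 * j + 1)) *
      ∑ k ∈ Finset.range n, Real.sin (a + 2 * k * π / n) * Real.cos (a + 2 * k * π / n) ^ (2 * j + 1)
    = (-1 : ℝ) ^ m * (n / 2) * Real.sin (2 * (m + 1) * a) :=
  stmt_2_general m n hdvd a
end

section
/- For integers m ≥ 0 and n ≥ 1 with n not dividing 2(m+1), and any real number a, we have ∑_{j=0}^m (-4)^j * C(m+j+1, 2j+1) * ∑_{k=0}^{n-1} sin(a + 2kπ/n) * cos(a + 2kπ/n)^{2j+1} = 0. -/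
/-!
With `y = cos² x`, the inner polynomial `∑ⱼ (-4)ʲ C(m+j+1, 2j+1) yʲ` is the Chebyshev polynomial
`U_m(1 - 2y)`: Pascal's rule turns it, together with the companion sum `∑ⱼ (-4)ʲ C(m+j, 2j) yʲ`
(which is `U_m - U_{m-1}` at `1 - 2y`), into the Chebyshev recurrence. As `1 - 2 cos² x = cos (π - 2x)`
and `sin x cos x = sin (π - 2x) / 2`, the `k`-th summand becomes `sin ((m+1)(π - 2x_k)) / 2` with
`x_k = a + 2kπ/n`. These sines run along an arithmetic progression of step `-4(m+1)π/n`, which is not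
a multiple of `2π` because `n ∤ 2(m+1)`, while `n` steps make a whole number of turns; so they sum to zero.
-/

open Real Finset Polynomial Polynomial.Chebyshev

theorem sum_sin_two_pi_div_mul_add_eq_zero (n : ℕ) {d : ℤ} (hd : ¬ (n : ℤ) ∣ d) (b : ℝ) :
    ∑ k ∈ range n, sin (2 * π * d / n * k + b) = 0 := by
  rcases eq_or_ne n 0 with rfl | hn
  · simp
  have hn' : (n : ℝ) ≠ 0 := Nat.cast_ne_zero.mpr hn
  have hstep : ∀ k : ℤ, 2 * π * d / n ≠ k * (2 * π) := by
    rintro k hk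
    have hdk : (d : ℝ) = k * n := by
      field_simp at hk
      nlinarith [pi_pos]
    exact hd ⟨k, by rw [mul_comm]; exact_mod_cast hdk⟩
  have hnum : sin (n * (2 * π * d / n) / 2) = 0 := by
    rw [show (n : ℝ) * (2 * π * d / n) / 2 = d * π by field_simp]
    exact sin_int_mul_pi d
  rw [sum_sin n hstep, hnum, zero_mul, zero_div]

section BinomialSums

variable {R : Type*} [CommRing R]

def binomialSumU (m : ℕ) (y : R) : R :=
  ∑ j ∈ range (m + 1), (-4) ^ j * ((m + j + 1).choose (2 * j + 1) : R) * y ^ j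

def binomialSumV (m : ℕ) (y : R) : R :=
  ∑ j ∈ range (m + 1), (-4) ^ j * ((m + j).choose (2 * j) : R) * y ^ j

theorem binomialSumV_succ (m : ℕ) (y : R) :
    binomialSumV (m + 1) y = binomialSumV m y - 4 * y * binomialSumU m y := by
  have pascal : ∀ j, (-4) ^ (j + 1) * ((m + 1 + (j + 1)).choose (2 * (j + 1)) : R) * y ^ (j + 1) =
      (-4) ^ (j + 1) * ((m + (j + 1)).choose (2 * (j + 1)) : R) * y ^ (j + 1)
        - 4 * y * ((-4) ^ j * ((m + j + 1).choose (2 * j + 1) : R) * y ^ j) := by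
    intro j
    rw [show m + 1 + (j + 1) = m + j + 1 + 1 by omega, show 2 * (j + 1) = 2 * j + 1 + 1 by omega,
      Nat.choose_succ_succ', show m + j + 1 = m + (j + 1) by omega]
    push_cast
    ring
  have hV : binomialSumV m y = ∑ j ∈ range (m + 1),
      (-4) ^ (j + 1) * ((m + (j + 1)).choose (2 * (j + 1)) : R) * y ^ (j + 1) + 1 := by
    have h := sum_range_succ' (fun j => (-4 : R) ^ j * ((m + j).choose (2 * j) : R) * y ^ j) (m + 1)
    rw [sum_range_succ, Nat.choose_eq_zero_of_lt (by omega : m + (m + 1) < 2 * (m + 1))] at h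
    simpa [binomialSumV] using h
  rw [binomialSumV, sum_range_succ', sum_congr rfl fun j _ => pascal j, sum_sub_distrib, ← mul_sum, hV,
    binomialSumU]
  simp only [pow_zero, add_zero, mul_zero, Nat.choose_zero_right, Nat.cast_one, mul_one]
  ring

theorem binomialSumU_succ (m : ℕ) (y : R) :
    binomialSumU (m + 1) y = binomialSumV (m + 1) y + binomialSumU m y := by
  have pascal : ∀ j, (-4) ^ j * ((m + 1 + j + 1).choose (2 * j + 1) : R) * y ^ j =
      (-4) ^ j * ((m + 1 + j).choose (2 * j) : R) * y ^ j
        + (-4) ^ j * ((m + j + 1).choose (2 * j + 1) : R) * y ^ j := by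
    intro j
    rw [show m + 1 + j + 1 = m + j + 1 + 1 by omega, Nat.choose_succ_succ',
      show m + j + 1 = m + 1 + j by omega]
    push_cast
    ring
  rw [binomialSumU, sum_congr rfl fun j _ => pascal j, sum_add_distrib]
  congr 1
  rw [sum_range_succ, Nat.choose_eq_zero_of_lt (by omega : m + (m + 1) + 1 < 2 * (m + 1) + 1)]
  simp [binomialSumU]

theorem binomialSums_eq_eval_U (m : ℕ) (y : R) :
    binomialSumU m y = (U R m).eval (1 - 2 * y) ∧
      binomialSumV m y = (U R m).eval (1 - 2 * y) - (U R (m - 1)).eval (1 - 2 * y) := by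
  induction m with
  | zero => simp [binomialSumU, binomialSumV]
  | succ m ih =>
    have hV : binomialSumV (m + 1) y =
        (U R (m + 1 : ℕ)).eval (1 - 2 * y) - (U R m).eval (1 - 2 * y) := by
      rw [binomialSumV_succ, ih.1, ih.2, Nat.cast_succ, U_add_one]
      simp only [eval_sub, eval_mul, eval_X, eval_ofNat]
      ring
    refine ⟨?_, by simpa using hV⟩
    rw [binomialSumU_succ, hV, ih.1, sub_add_cancel]

end BinomialSums

theorem sin_mul_cos_mul_binomialSumU (m : ℕ) (x : ℝ) :
    sin x * cos x * binomialSumU m (cos x ^ 2) = sin ((m + 1) * (π - 2 * x)) / 2 := by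
  have h := U_real_cos (π - 2 * x) m
  rw [cos_pi_sub, sin_pi_sub, cos_two_mul, sin_two_mul, Int.cast_natCast] at h
  rw [(binomialSums_eq_eval_U m _).1, ← h]
  ring_nf

theorem stmt_3_general (m n : ℕ) (hdvd : ¬ n ∣ 2 * (m + 1)) (a : ℝ) :
    ∑ j ∈ Finset.range (m + 1), (-4 : ℝ) ^ j * (Nat.choose (m + j + 1) (2 * j + 1)) *
      ∑ k ∈ Finset.range n, Real.sin (a + 2 * k * π / n) * Real.cos (a + 2 * k * π / n) ^ (2 * j + 1)
    = 0 := by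
  have hd : ¬ (n : ℤ) ∣ -(2 * (m + 1) : ℕ) := by
    rwa [Int.dvd_neg, Int.natCast_dvd_natCast]
  calc _ = ∑ k ∈ range n, sin (a + 2 * k * π / n) * cos (a + 2 * k * π / n) *
        binomialSumU m (cos (a + 2 * k * π / n) ^ 2) := by
        simp only [binomialSumU, mul_sum]
        rw [sum_comm]
        refine sum_congr rfl fun k _ => sum_congr rfl fun j _ => ?_
        ring
    _ = ∑ k ∈ range n, sin (2 * π * (-(2 * (m + 1) : ℕ) : ℤ) / n * k + (m + 1) * (π - 2 * a)) / 2 := by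
        refine sum_congr rfl fun k _ => ?_
        rw [sin_mul_cos_mul_binomialSumU]
        push_cast
        ring_nf
    _ = 0 := by rw [← sum_div, sum_sin_two_pi_div_mul_add_eq_zero n hd, zero_div]

theorem stmt_3 (m n : ℕ) (hn : 1 ≤ n) (hdvd : ¬ n ∣ 2 * (m + 1)) (a : ℝ) :
    ∑ j ∈ Finset.range (m + 1), (-4 : ℝ) ^ j * (Nat.choose (m + j + 1) (2 * j + 1)) *
      ∑ k ∈ Finset.range n, Real.sin (a + 2 * k * π / n) * Real.cos (a + 2 * k * π / n) ^ (2 * j + 1)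
    = 0 :=
  stmt_3_general m n hdvd a
end

section
/- For any integer n ≥ 1, real number a, and real x with x^n ≠ cos(na) ± i·sin(na) in the sense that 1 + x^{2n} - 2x^n cos(na) ≠ 0, and with 1 + x^2 - 2x cos(a + 2kπ/n) ≠ 0 for all k, one has ∑_{k=0}^{n-1} sin(a + 2kπ/n) / (1 + x^2 - 2x cos(a + 2kπ/n)) = n x^{n-1} sin(na) / (1 + x^{2n} - 2 x^n cos(na)). -/
/-!
The points `w k = exp (i (a + 2kπ/n))` are the `n`-th roots of `exp (i n a)`, so
`∏ k, (1 - y w k) = 1 - yⁿ exp (i n a)`. Taking the logarithmic derivative in `y` gives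
`∑ k, w k / (1 - x w k) = n xⁿ⁻¹ exp (i n a) / (1 - xⁿ exp (i n a))`, and the claim is the
imaginary part of this identity, because
`Im (r e^{iθ} / (1 - x e^{iθ})) = r sin θ / |1 - x e^{iθ}|²` for real `r`, `x`, `θ`.
-/

open Real Finset

theorem IsPrimitiveRoot.prod_one_sub_mul_pow_mul {R : Type*} [CommRing R] [IsDomain R] {ζ : R}
    {n : ℕ} (hζ : IsPrimitiveRoot ζ n) (hn : 0 < n) (α y : R) :
    ∏ k ∈ range n, (1 - y * (ζ ^ k * α)) = 1 - y ^ n * α ^ n := by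
  have h := congrArg (Polynomial.eval 1) (X_pow_sub_C_eq_prod hζ hn (α := y * α) rfl)
  simp only [Polynomial.eval_sub, Polynomial.eval_pow, Polynomial.eval_X, Polynomial.eval_C,
    Polynomial.eval_prod, one_pow, mul_pow] at h
  rw [h]
  exact prod_congr rfl fun k _ => by ring

theorem sum_div_one_sub_mul_eq_of_prod_eq {𝕜 ι : Type*} [NontriviallyNormedField 𝕜]
    {s : Finset ι} {w : ι → 𝕜} {c : 𝕜} {n : ℕ}
    (hprod : ∀ y, ∏ i ∈ s, (1 - y * w i) = 1 - y ^ n * c) {x : 𝕜}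
    (hx : ∀ i ∈ s, 1 - x * w i ≠ 0) :
    ∑ i ∈ s, w i / (1 - x * w i) = n * x ^ (n - 1) * c / (1 - x ^ n * c) := by
  have hlog := logDeriv_prod (f := fun i y => 1 - y * w i) hx fun i _ => by fun_prop
  rw [funext hprod] at hlog
  simpa [logDeriv_apply, neg_div] using hlog.symm

theorem Complex.normSq_one_sub_ofReal_mul_exp (x θ : ℝ) :
    Complex.normSq (1 - x * Complex.exp (θ * Complex.I)) = 1 + x ^ 2 - 2 * x * Real.cos θ := by
  rw [Complex.normSq_apply]
  simp only [sub_re, one_re, mul_re, ofReal_re, exp_ofReal_mul_I_re, ofReal_im,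
    exp_ofReal_mul_I_im, zero_mul, sub_zero, sub_im, one_im, mul_im, add_zero, zero_sub, mul_neg,
    neg_mul, neg_neg]
  nlinarith [Real.sin_sq_add_cos_sq θ]

theorem Complex.im_ofReal_mul_exp_div_one_sub (r x θ : ℝ) :
    (r * Complex.exp (θ * Complex.I) / (1 - x * Complex.exp (θ * Complex.I))).im
      = r * Real.sin θ / (1 + x ^ 2 - 2 * x * Real.cos θ) := by
  rw [Complex.div_im, Complex.normSq_one_sub_ofReal_mul_exp, ← sub_div]
  congr 1
  simp only [mul_im, ofReal_re, exp_ofReal_mul_I_im, ofReal_im, exp_ofReal_mul_I_re, zero_mul,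
    add_zero, sub_re, one_re, mul_re, sub_zero, sub_im, one_im, zero_sub, mul_neg, sub_neg_eq_add]
  ring

theorem stmt_4_general (n : ℕ) (a x : ℝ)
    (h2 : ∀ k ∈ Finset.range n, 1 + x ^ 2 - 2 * x * Real.cos (a + 2 * k * π / n) ≠ 0) :
    ∑ k ∈ Finset.range n, Real.sin (a + 2 * k * π / n) /
        (1 + x ^ 2 - 2 * x * Real.cos (a + 2 * k * π / n))
    = n * x ^ (n - 1) * Real.sin (n * a) / (1 + x ^ (2 * n) - 2 * x ^ n * Real.cos (n * a)) := by
  rcases Nat.eq_zero_or_pos n with rfl | hn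
  · simp
  set ζ := Complex.exp (2 * π * Complex.I / n)
  set α := Complex.exp (a * Complex.I)
  have hroot : ∀ k : ℕ, Complex.exp (↑(a + 2 * k * π / n) * Complex.I) = ζ ^ k * α := by
    intro k
    rw [← Complex.exp_nat_mul, ← Complex.exp_add]
    congr 1
    push_cast
    ring
  have hpow : Complex.exp (↑(n * a) * Complex.I) = α ^ n := by
    rw [← Complex.exp_nat_mul]
    push_cast
    ring_nf
  have hne : ∀ k ∈ range n, 1 - (x : ℂ) * (ζ ^ k * α) ≠ 0 := fun k hk h0 => h2 k hk <| by
    rw [← Complex.normSq_one_sub_ofReal_mul_exp, hroot, h0, map_zero]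
  have hsum := sum_div_one_sub_mul_eq_of_prod_eq
    ((Complex.isPrimitiveRoot_exp n hn.ne').prod_one_sub_mul_pow_mul hn α) hne
  calc ∑ k ∈ range n, Real.sin (a + 2 * k * π / n) /
          (1 + x ^ 2 - 2 * x * Real.cos (a + 2 * k * π / n))
      = (∑ k ∈ range n, ζ ^ k * α / (1 - x * (ζ ^ k * α))).im := by
        rw [Complex.im_sum]
        refine sum_congr rfl fun k _ => ?_
        have h := Complex.im_ofReal_mul_exp_div_one_sub 1 x (a + 2 * k * π / n)
        rw [Complex.ofReal_one, one_mul, one_mul, hroot] at h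
        exact h.symm
    _ = ((n * x ^ (n - 1) : ℝ) * α ^ n / (1 - (x ^ n : ℝ) * α ^ n)).im := by
        rw [hsum]
        push_cast
        rfl
    _ = n * x ^ (n - 1) * Real.sin (n * a) / (1 + x ^ (2 * n) - 2 * x ^ n * Real.cos (n * a)) := by
        rw [← hpow, Complex.im_ofReal_mul_exp_div_one_sub, pow_mul']

theorem stmt_4 (n : ℕ) (hn : 1 ≤ n) (a x : ℝ)
    (h1 : 1 + x ^ (2 * n) - 2 * x ^ n * Real.cos (n * a) ≠ 0)
    (h2 : ∀ k ∈ Finset.range n, 1 + x ^ 2 - 2 * x * Real.cos (a + 2 * k * π / n) ≠ 0) :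
    ∑ k ∈ Finset.range n, Real.sin (a + 2 * k * π / n) /
        (1 + x ^ 2 - 2 * x * Real.cos (a + 2 * k * π / n))
    = n * x ^ (n - 1) * Real.sin (n * a) / (1 + x ^ (2 * n) - 2 * x ^ n * Real.cos (n * a)) :=
  stmt_4_general n a x h2
end

section
/- For integers m ≥ 0 and n ≥ 1 with n dividing 2m+1, we have ∑_{j=0}^m ((-4)^j / (2j+1)) * C(m+j, 2j) * ∑_{k=0}^{n-1} ( sin(2kπ/n)^{2j+1} + cos(2kπ/n)^{2j+1} ) = (-1)^m * n / (2m+1). -/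
/-!
Put `s = sin θ`. By induction on `m`, using the addition formulas for the angle `2θ`,
`cos ((2m+1)θ) / cos θ` and `sin ((2m+1)θ) / sin θ` are the even polynomials in `s` with
coefficients `(-4)^j C(m+j,2j)` and `(-4)^j (C(m+j,2j) + 2 C(m+j,2j+1))`. Since
`(2j+1) (C(m+j,2j) + 2 C(m+j,2j+1)) = (2m+1) C(m+j,2j)`, the inner sum over `j` evaluated at
`sin θ` is `sin ((2m+1)θ) / (2m+1)`, and at `cos θ = sin (π/2 - θ)` it is
`(-1)^m cos ((2m+1)θ) / (2m+1)`. For `θ = 2kπ/n` with `n ∣ 2m+1` the angle `(2m+1)θ` is a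
multiple of `2π`, so each of the `n` values of `k` contributes `(-1)^m / (2m+1)`.
-/

open Real Finset

noncomputable def cosCoeff (m j : ℕ) : ℝ := (-4) ^ j * (m + j).choose (2 * j)

noncomputable def sinCoeff (m j : ℕ) : ℝ :=
  (-4) ^ j * ((m + j).choose (2 * j) + 2 * (m + j).choose (2 * j + 1))

noncomputable def cosPoly (m : ℕ) (x : ℝ) : ℝ :=
  ∑ j ∈ range (m + 1), cosCoeff m j * x ^ (2 * j)

noncomputable def sinPoly (m : ℕ) (x : ℝ) : ℝ :=
  ∑ j ∈ range (m + 1), sinCoeff m j * x ^ (2 * j)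

lemma cosCoeff_succ_succ (m j : ℕ) :
    cosCoeff (m + 1) (j + 1) = cosCoeff m (j + 1) - 2 * (cosCoeff m j + sinCoeff m j) := by
  simp only [cosCoeff, sinCoeff, show m + 1 + (j + 1) = m + j + 1 + 1 by ring,
    show m + (j + 1) = m + j + 1 by ring, show 2 * (j + 1) = 2 * j + 1 + 1 by ring,
    Nat.choose_succ_succ]
  push_cast
  ring

lemma sinCoeff_succ_succ (m j : ℕ) :
    sinCoeff (m + 1) (j + 1) =
      sinCoeff m (j + 1) + 2 * cosCoeff m (j + 1) - 2 * (cosCoeff m j + sinCoeff m j) := by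
  simp only [cosCoeff, sinCoeff, show m + 1 + (j + 1) = m + j + 1 + 1 by ring,
    show m + (j + 1) = m + j + 1 by ring, show 2 * (j + 1) = 2 * j + 1 + 1 by ring,
    Nat.choose_succ_succ]
  push_cast
  ring

lemma sum_range_succ_mul_pow_eq_add_sq_mul {a b c : ℕ → ℝ} (x : ℝ) (N : ℕ)
    (h₀ : c 0 = a 0) (hsucc : ∀ j, c (j + 1) = a (j + 1) + b j) :
    ∑ j ∈ range (N + 1), c j * x ^ (2 * j) =
      ∑ j ∈ range (N + 1), a j * x ^ (2 * j) +
        x ^ 2 * ∑ j ∈ range N, b j * x ^ (2 * j) := by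
  simp only [sum_range_succ' _ N, h₀, hsucc, mul_sum, add_mul, sum_add_distrib]
  rw [add_right_comm]
  congr 2
  funext j
  ring

lemma cosCoeff_self_succ (m : ℕ) : cosCoeff m (m + 1) = 0 := by
  simp [cosCoeff, Nat.choose_eq_zero_of_lt (show m + (m + 1) < 2 * (m + 1) by omega)]

lemma sinCoeff_self_succ (m : ℕ) : sinCoeff m (m + 1) = 0 := by
  simp [sinCoeff, Nat.choose_eq_zero_of_lt (show m + (m + 1) < 2 * (m + 1) by omega),
    Nat.choose_eq_zero_of_lt (show m + (m + 1) < 2 * (m + 1) + 1 by omega)]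

lemma cosPoly_succ (m : ℕ) (x : ℝ) :
    cosPoly (m + 1) x = cosPoly m x - 2 * x ^ 2 * (cosPoly m x + sinPoly m x) := by
  rw [cosPoly, sum_range_succ_mul_pow_eq_add_sq_mul x (m + 1) (a := cosCoeff m)
    (b := fun j => -2 * (cosCoeff m j + sinCoeff m j)) (by simp [cosCoeff])
    fun j => by rw [cosCoeff_succ_succ]; ring]
  rw [sum_range_succ (fun j => cosCoeff m j * x ^ (2 * j)), cosCoeff_self_succ, zero_mul,
    add_zero]
  simp only [cosPoly, sinPoly, mul_sum, ← sum_add_distrib, sub_eq_add_neg, ← sum_neg_distrib]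
  exact sum_congr rfl fun j _ => by ring

lemma sinPoly_succ (m : ℕ) (x : ℝ) :
    sinPoly (m + 1) x =
      sinPoly m x + 2 * cosPoly m x - 2 * x ^ 2 * (cosPoly m x + sinPoly m x) := by
  rw [sinPoly, sum_range_succ_mul_pow_eq_add_sq_mul x (m + 1)
    (a := fun j => sinCoeff m j + 2 * cosCoeff m j)
    (b := fun j => -2 * (cosCoeff m j + sinCoeff m j)) (by simp [sinCoeff, cosCoeff]; ring)
    fun j => by rw [sinCoeff_succ_succ]; ring]
  rw [sum_range_succ (fun j => (sinCoeff m j + 2 * cosCoeff m j) * x ^ (2 * j)),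
    cosCoeff_self_succ, sinCoeff_self_succ, mul_zero, add_zero, zero_mul, add_zero]
  simp only [cosPoly, sinPoly, mul_sum, ← sum_add_distrib, sub_eq_add_neg, ← sum_neg_distrib]
  exact sum_congr rfl fun j _ => by ring

lemma cos_and_sin_two_mul_add_one_mul (m : ℕ) (θ : ℝ) :
    cos ((2 * m + 1) * θ) = cos θ * cosPoly m (sin θ) ∧
      sin ((2 * m + 1) * θ) = sin θ * sinPoly m (sin θ) := by
  induction m with
  | zero => simp [cosPoly, sinPoly, cosCoeff, sinCoeff]
  | succ m ih =>
    obtain ⟨hcos, hsin⟩ := ih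
    have hangle : (2 * ((m + 1 : ℕ) : ℝ) + 1) * θ = (2 * m + 1) * θ + 2 * θ := by
      push_cast; ring
    have hcos_sq : cos θ ^ 2 = 1 - sin θ ^ 2 := cos_sq' θ
    rw [hangle, cos_add, sin_add, hcos, hsin, cos_two_mul, sin_two_mul, cosPoly_succ, sinPoly_succ]
    constructor
    · linear_combination (2 * cosPoly m (sin θ) * cos θ) * hcos_sq
    · linear_combination (2 * sin θ * (cosPoly m (sin θ) + sinPoly m (sin θ))) * hcos_sq

lemma two_mul_add_one_mul_choose (m j : ℕ) :
    (2 * j + 1) * ((m + j).choose (2 * j) + 2 * (m + j).choose (2 * j + 1)) =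
      (2 * m + 1) * (m + j).choose (2 * j) := by
  rcases le_or_gt j m with hjm | hmj
  · obtain ⟨t, rfl⟩ := Nat.exists_eq_add_of_le hjm
    have h := Nat.choose_succ_right_eq (j + t + j) (2 * j)
    rw [show j + t + j - 2 * j = t by omega] at h
    linarith
  · simp [Nat.choose_eq_zero_of_lt (show m + j < 2 * j by omega),
      Nat.choose_eq_zero_of_lt (show m + j < 2 * j + 1 by omega)]

lemma sum_choose_mul_pow_two_mul_add_one (m : ℕ) (x : ℝ) :
    ∑ j ∈ range (m + 1),
      ((-4 : ℝ) ^ j / (2 * j + 1)) * (m + j).choose (2 * j) * x ^ (2 * j + 1) =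
      x * sinPoly m x / (2 * m + 1) := by
  rw [eq_div_iff (by positivity), sinPoly, mul_sum, sum_mul]
  refine sum_congr rfl fun j _ => ?_
  have hchoose : (2 * (j : ℝ) + 1) *
      ((m + j).choose (2 * j) + 2 * (m + j).choose (2 * j + 1)) =
      (2 * m + 1) * (m + j).choose (2 * j) := by
    exact_mod_cast two_mul_add_one_mul_choose m j
  rw [sinCoeff]
  field_simp
  linear_combination -x ^ (2 * j + 1) * hchoose

lemma sum_choose_mul_sin_pow (m : ℕ) (θ : ℝ) :
    ∑ j ∈ range (m + 1),
      ((-4 : ℝ) ^ j / (2 * j + 1)) * (m + j).choose (2 * j) * sin θ ^ (2 * j + 1) =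
      sin ((2 * m + 1) * θ) / (2 * m + 1) := by
  rw [sum_choose_mul_pow_two_mul_add_one, (cos_and_sin_two_mul_add_one_mul m θ).2]

lemma sum_choose_mul_cos_pow (m : ℕ) (θ : ℝ) :
    ∑ j ∈ range (m + 1),
      ((-4 : ℝ) ^ j / (2 * j + 1)) * (m + j).choose (2 * j) * cos θ ^ (2 * j + 1) =
      (-1) ^ m * cos ((2 * m + 1) * θ) / (2 * m + 1) := by
  have hangle : (2 * m + 1) * (π / 2 - θ) = π / 2 - (2 * m + 1) * θ + m * π := by ring
  rw [← sin_pi_div_two_sub, sum_choose_mul_sin_pow, hangle, sin_add_nat_mul_pi,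
    sin_pi_div_two_sub, mul_comm]

theorem stmt_5_general (m n : ℕ) (hdvd : n ∣ 2 * m + 1) :
    ∑ j ∈ Finset.range (m + 1), ((-4 : ℝ) ^ j / (2 * j + 1)) * (Nat.choose (m + j) (2 * j)) *
      ∑ k ∈ Finset.range n,
        (Real.sin (2 * k * π / n) ^ (2 * j + 1) + Real.cos (2 * k * π / n) ^ (2 * j + 1))
    = (-1 : ℝ) ^ m * n / (2 * m + 1) := by
  obtain ⟨q, hq⟩ := hdvd
  have hn : (n : ℝ) ≠ 0 := Nat.cast_ne_zero.2 (by rintro rfl; omega)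
  have hangle (k : ℕ) : (2 * m + 1) * (2 * k * π / n) = (q * k : ℕ) * (2 * π) := by
    rw [show (2 * m + 1 : ℝ) = n * q by exact_mod_cast hq]
    push_cast
    field_simp
  have hterm (k : ℕ) : ∑ j ∈ range (m + 1),
      ((-4 : ℝ) ^ j / (2 * j + 1)) * (m + j).choose (2 * j) *
      (sin (2 * k * π / n) ^ (2 * j + 1) + cos (2 * k * π / n) ^ (2 * j + 1)) =
      (-1) ^ m / (2 * m + 1) := by
    simp only [mul_add, sum_add_distrib, sum_choose_mul_sin_pow, sum_choose_mul_cos_pow, hangle,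
      sin_periodic.nat_mul_eq, sin_zero, cos_nat_mul_two_pi]
    ring
  simp_rw [mul_sum]
  rw [sum_comm, sum_congr rfl fun k _ => hterm k, sum_const, card_range, nsmul_eq_mul]
  ring

theorem stmt_5 (m n : ℕ) (hn : 1 ≤ n) (hdvd : n ∣ 2 * m + 1) :
    ∑ j ∈ Finset.range (m + 1), ((-4 : ℝ) ^ j / (2 * j + 1)) * (Nat.choose (m + j) (2 * j)) *
      ∑ k ∈ Finset.range n,
        (Real.sin (2 * k * π / n) ^ (2 * j + 1) + Real.cos (2 * k * π / n) ^ (2 * j + 1))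
    = (-1 : ℝ) ^ m * n / (2 * m + 1) :=
  stmt_5_general m n hdvd
end
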